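/- arXiv:2310.17248 — 2 statements merged into one kernel-verified Lean document; each statement's English description precedes it below -/
import Mathlib

section
/- For all admissible λ0 and λ, if Q λ λ0 > Q λ0 λ0 then ℓ λ > ℓ λ0; in particular, any step that strictly increases the EM surrogate strictly increases the incomplete-data log-likelihood. -/
open scoped BigOperators

/-- Forward projection: `g p lam d = ∑ b, p b d * lam b`. -/
noncomputable def g {B D : Type*} [Fintype B] (p : B → D → ℝ) (lam : B → ℝ) (d : D) : ℝ :=
  ∑ b, p b d * lam b

/-- Incomplete-data log-likelihood `ℓ lam = ∑ d, (n d * log (g lam d) - g lam d)`. -/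
noncomputable def logLik {B D : Type*} [Fintype B] [Fintype D]
    (p : B → D → ℝ) (n : D → ℝ) (lam : B → ℝ) : ℝ :=
  ∑ d, (n d * Real.log (g p lam d) - g p lam d)

/-- Observed Fisher information `I lam b₁ b₂ = ∑ d, (n d / (g lam d)^2) * p b₁ d * p b₂ d`. -/
noncomputable def fisherI {B D : Type*} [Fintype B] [Fintype D]
    (p : B → D → ℝ) (n : D → ℝ) (lam : B → ℝ) (b₁ b₂ : B) : ℝ :=
  ∑ d, (n d / (g p lam d) ^ 2) * p b₁ d * p b₂ d

/-- EM surrogate `Q lam lam0` (with Lean's convention `Real.log 0 = 0`). -/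
noncomputable def Qsur {B D : Type*} [Fintype B] [Fintype D]
    (p : B → D → ℝ) (n : D → ℝ) (lam lam0 : B → ℝ) : ℝ :=
  ∑ d, n d * ∑ b, (p b d * lam0 b / g p lam0 d) * Real.log (lam b * p b d) - ∑ b, lam b

/-- The Shepp–Vardi EM update `T lam b = lam b * ∑ d, n d * p b d / g lam d`. -/
noncomputable def emT {B D : Type*} [Fintype B] [Fintype D]
    (p : B → D → ℝ) (n : D → ℝ) (lam : B → ℝ) (b : B) : ℝ :=
  lam b * ∑ d, n d * p b d / g p lam d

/-- `lam` is admissible: positive charges, and positive projection wherever a count was observed. -/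
def Admissible {B D : Type*} [Fintype B] [Fintype D]
    (p : B → D → ℝ) (n : D → ℝ) (lam : B → ℝ) : Prop :=
  (∀ b, lam b > 0) ∧ ∀ d, n d > 0 → g p lam d > 0

/-!
Since `∑ d, g lam d = ∑ b, lam b`, the mass terms of `ℓ` and `Q` agree, and it suffices to compare
the logarithmic terms detector by detector. For a fixed `d`, the weights
`p b d * lam0 b / g lam0 d` form a probability vector (the posterior of the pixel given a count
in `d`), and the `d`-th term of `Q lam lam0 - Q lam0 lam0` is `n d` times the corresponding
average of `log (lam b / lam0 b)`. By Jensen's inequality for the concave `log` this average is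
at most the log of the average of `lam b / lam0 b`, which is `log (g lam d / g lam0 d)`. Hence `Q lam lam0 - Q lam0 lam0 ≤ ℓ lam - ℓ lam0`.
-/

open Finset Real

section EMInequality

variable {B D : Type*} [Fintype B] (p : B → D → ℝ)

theorem sum_g_eq_sum_self [Fintype D] (hpsum : ∀ b, ∑ d, p b d = 1) (μ : B → ℝ) :
    ∑ d, g p μ d = ∑ b, μ b := by
  simp only [g]
  rw [sum_comm]
  simp [← sum_mul, hpsum]

theorem logLik_eq_sum_sub_sum [Fintype D] (hpsum : ∀ b, ∑ d, p b d = 1) (n : D → ℝ) (μ : B → ℝ) :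
    logLik p n μ = ∑ d, n d * log (g p μ d) - ∑ b, μ b := by
  rw [logLik, sum_sub_distrib, sum_g_eq_sum_self p hpsum]

theorem sum_posterior_mul_log_sub_le {d : D} (hp : ∀ b, 0 ≤ p b d)
    {lam lam0 : B → ℝ} (hlam : ∀ b, 0 < lam b) (hlam0 : ∀ b, 0 < lam0 b)
    (hg : 0 < g p lam d) (hg0 : 0 < g p lam0 d) :
    ∑ b, (p b d * lam0 b / g p lam0 d) * log (lam b * p b d)
        - ∑ b, (p b d * lam0 b / g p lam0 d) * log (lam0 b * p b d)
      ≤ log (g p lam d) - log (g p lam0 d) := by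
  set w : B → ℝ := fun b ↦ p b d * lam0 b / g p lam0 d with hw_def
  have hw : ∀ b ∈ univ, 0 ≤ w b := fun b _ ↦ by have := hp b; have := hlam0 b; positivity
  have hw_sum : ∑ b, w b = 1 := by
    rw [hw_def, ← sum_div, div_eq_one_iff_eq hg0.ne']
    rfl
  have hlog_ratio : ∀ b, w b * log (lam b * p b d) - w b * log (lam0 b * p b d)
      = w b * log (lam b / lam0 b) := by
    intro b
    rcases (hp b).eq_or_lt with hpb | hpb
    · simp [hw_def, ← hpb]
    · rw [log_mul (hlam b).ne' hpb.ne', log_mul (hlam0 b).ne' hpb.ne',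
        log_div (hlam b).ne' (hlam0 b).ne']
      ring
  have hmean : ∑ b, w b * (lam b / lam0 b) = g p lam d / g p lam0 d := by
    rw [g, sum_div]
    refine sum_congr rfl fun b _ ↦ ?_
    have := (hlam0 b).ne'
    simp only [hw_def]
    field_simp
  calc ∑ b, w b * log (lam b * p b d) - ∑ b, w b * log (lam0 b * p b d)
      = ∑ b, w b • log (lam b / lam0 b) := by
        simp only [← sum_sub_distrib, hlog_ratio, smul_eq_mul]
    _ ≤ log (∑ b, w b • (lam b / lam0 b)) :=
        strictConcaveOn_log_Ioi.concaveOn.le_map_sum hw hw_sum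
          fun b _ ↦ div_pos (hlam b) (hlam0 b)
    _ = log (g p lam d) - log (g p lam0 d) := by
        simp only [smul_eq_mul, hmean, log_div hg.ne' hg0.ne']

theorem Qsur_sub_le_logLik_sub [Fintype D] (hp : ∀ b d, 0 ≤ p b d) (hpsum : ∀ b, ∑ d, p b d = 1)
    {n : D → ℝ} (hn : ∀ d, 0 ≤ n d) {lam lam0 : B → ℝ}
    (hlam : Admissible p n lam) (hlam0 : Admissible p n lam0) :
    Qsur p n lam lam0 - Qsur p n lam0 lam0 ≤ logLik p n lam - logLik p n lam0 := by
  have hterm : ∀ d, n d * ∑ b, (p b d * lam0 b / g p lam0 d) * log (lam b * p b d)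
      - n d * ∑ b, (p b d * lam0 b / g p lam0 d) * log (lam0 b * p b d)
      ≤ n d * log (g p lam d) - n d * log (g p lam0 d) := by
    intro d
    rcases (hn d).eq_or_lt with hnd | hnd
    · simp [← hnd]
    · simp only [← mul_sub]
      exact mul_le_mul_of_nonneg_left
        (sum_posterior_mul_log_sub_le p (hp · d) hlam.1 hlam0.1 (hlam.2 d hnd) (hlam0.2 d hnd))
        hnd.le
  have hsum := sum_le_sum fun d (_ : d ∈ univ) ↦ hterm d
  simp only [sum_sub_distrib] at hsum
  rw [Qsur, Qsur, logLik_eq_sum_sub_sum p hpsum, logLik_eq_sum_sub_sum p hpsum]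
  linarith

end EMInequality

theorem em_strict_increase_general {B D : Type*} [Fintype B] [Fintype D]
    (p : B → D → ℝ) (hp : ∀ b d, 0 ≤ p b d) (hpsum : ∀ b, ∑ d, p b d = 1)
    (n : D → ℝ) (hn : ∀ d, 0 ≤ n d)
    (lam0 : B → ℝ) (hlam0 : Admissible p n lam0)
    (lam : B → ℝ) (hlam : Admissible p n lam)
    (hQ : Qsur p n lam lam0 > Qsur p n lam0 lam0) :
    logLik p n lam > logLik p n lam0 := by
  have := Qsur_sub_le_logLik_sub p hp hpsum hn hlam hlam0
  linarith

/-- a strict increase of the EM surrogate strictly increases ℓ. -/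
theorem em_strict_increase {B D : Type*} [Fintype B] [Fintype D] [Nonempty B] [Nonempty D]
    (p : B → D → ℝ) (hp : ∀ b d, 0 ≤ p b d) (hpsum : ∀ b, ∑ d, p b d = 1)
    (n : D → ℝ) (hn : ∀ d, 0 ≤ n d)
    (lam0 : B → ℝ) (hlam0 : Admissible p n lam0)
    (lam : B → ℝ) (hlam : Admissible p n lam)
    (hQ : Qsur p n lam lam0 > Qsur p n lam0 lam0) :
    logLik p n lam > logLik p n lam0 :=
  em_strict_increase_general p hp hpsum n hn lam0 hlam0 lam hlam hQ
end

section
/- (Monotonicity of the Shepp–Vardi EM iteration.) Let λ0 be admissible and assume that for every b ∈ B there exists d ∈ D with n d * p b d > 0. Then T λ0 is admissible and the incomplete-data log-likelihood does not decrease along the EM step: ℓ (T λ0) ≥ ℓ λ0. -/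
/-!
The EM step is a minorize–maximize step. Fix a detector `d` and write `λ₁ = T λ₀`. Jensen's
inequality for the concave `log`, with the weights `p b d * λ₀ b / g λ₀ d`, bounds the gain
`n d * (log (g λ₁ d) - log (g λ₀ d))` from below; summed over `d`, these lower bounds add up to
`∑ b, λ₁ b * log (λ₁ b / λ₀ b)`, precisely because `λ₁` is the EM update of `λ₀`. Since the
columns of `p` sum to one, the remaining term of `ℓ` is the total mass `∑ b, λ b`, and its change
`∑ b, (λ₁ b - λ₀ b)` is dominated by that same sum via `log t ≥ 1 - 1 / t`.
-/

open scoped BigOperators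

open Finset Real

theorem sub_le_mul_log_div {x y : ℝ} (hx : 0 < x) (hy : 0 < y) : y - x ≤ y * log (y / x) := by
  have h := one_sub_inv_le_log_of_pos (div_pos hy hx)
  rw [inv_div] at h
  calc y - x = y * (1 - x / y) := by field_simp
    _ ≤ y * log (y / x) := mul_le_mul_of_nonneg_left h hy.le

/-- Jensen's inequality for `log` with the unnormalised weights `a i * x i`. -/
theorem sum_mul_log_div_le {ι : Type*} [Fintype ι] {a x y : ι → ℝ} (ha : ∀ i, 0 ≤ a i)
    (hx : ∀ i, 0 < x i) (hy : ∀ i, 0 < y i) (hS : 0 < ∑ i, a i * x i) :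
    ∑ i, a i * x i * log (y i / x i) ≤
      (∑ i, a i * x i) * log ((∑ i, a i * y i) / ∑ i, a i * x i) := by
  set S := ∑ i, a i * x i
  have hjensen := strictConcaveOn_log_Ioi.concaveOn.le_map_sum (t := univ)
    (w := fun i => a i * x i / S) (p := fun i => y i / x i)
    (fun i _ => div_nonneg (mul_nonneg (ha i) (hx i).le) hS.le)
    (by rw [← sum_div, div_self hS.ne'])
    (fun i _ => div_pos (hy i) (hx i))
  simp only [smul_eq_mul] at hjensen
  have hmean : ∑ i, a i * x i / S * (y i / x i) = (∑ i, a i * y i) / S := by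
    rw [sum_div]
    refine sum_congr rfl fun i _ => ?_
    field_simp [(hx i).ne']
  rw [hmean] at hjensen
  calc ∑ i, a i * x i * log (y i / x i)
      = S * ∑ i, a i * x i / S * log (y i / x i) := by
        rw [mul_sum]
        refine sum_congr rfl fun i _ => ?_
        field_simp
    _ ≤ S * log ((∑ i, a i * y i) / S) := mul_le_mul_of_nonneg_left hjensen hS.le

section EM

variable {B D : Type*} [Fintype B] {p : B → D → ℝ} {n : D → ℝ}

theorem sum_g_eq_sum [Fintype D] (hpsum : ∀ b, ∑ d, p b d = 1) (lam : B → ℝ) :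
    ∑ d, g p lam d = ∑ b, lam b := by
  simp only [g]
  rw [sum_comm]
  exact sum_congr rfl fun b _ => by rw [← sum_mul, hpsum b, one_mul]

theorem logLik_eq [Fintype D] (hpsum : ∀ b, ∑ d, p b d = 1) (lam : B → ℝ) :
    logLik p n lam = ∑ d, n d * log (g p lam d) - ∑ b, lam b := by
  rw [logLik, sum_sub_distrib, sum_g_eq_sum hpsum]

theorem g_nonneg {d : D} (hp : ∀ b, 0 ≤ p b d) {lam : B → ℝ} (hlam : ∀ b, 0 ≤ lam b) :
    0 ≤ g p lam d :=
  sum_nonneg fun b _ => mul_nonneg (hp b) (hlam b)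

theorem g_pos_of_g_pos {d : D} (hp : ∀ b, 0 ≤ p b d) {lam mu : B → ℝ} (hmu : ∀ b, 0 < mu b)
    (h : 0 < g p lam d) : 0 < g p mu d := by
  obtain ⟨b, -, hb⟩ := exists_lt_of_sum_lt (s := univ) (f := fun _ => (0 : ℝ))
    (by simpa [g] using h)
  have hpb : 0 < p b d := (hp b).lt_of_ne fun h => by simp [← h] at hb
  calc 0 < p b d * mu b := mul_pos hpb (hmu b)
    _ ≤ g p mu d := single_le_sum (fun b _ => mul_nonneg (hp b) (hmu b).le) (mem_univ b)

theorem div_g_mul_sum_le_mul_log_sub {d : D} (hp : ∀ b, 0 ≤ p b d) {lam mu : B → ℝ}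
    (hlam : ∀ b, 0 < lam b) (hmu : ∀ b, 0 < mu b) {c : ℝ} (hc : 0 ≤ c)
    (hg : 0 < c → 0 < g p lam d) :
    c / g p lam d * ∑ b, p b d * lam b * log (mu b / lam b) ≤
      c * (log (g p mu d) - log (g p lam d)) := by
  rcases hc.eq_or_lt with rfl | hc
  · simp
  have hglam := hg hc
  have hgmu := g_pos_of_g_pos hp hmu hglam
  have hjensen := sum_mul_log_div_le hp hlam hmu hglam
  rw [← g, ← g, log_div hgmu.ne' hglam.ne'] at hjensen
  rw [div_mul_eq_mul_div, mul_div_assoc]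
  refine mul_le_mul_of_nonneg_left ?_ hc.le
  rwa [div_le_iff₀' hglam]

variable [Fintype D]

theorem sum_emT_mul_eq (lam f : B → ℝ) :
    ∑ b, emT p n lam b * f b = ∑ d, n d / g p lam d * ∑ b, p b d * lam b * f b := by
  simp only [emT, mul_sum, sum_mul]
  rw [sum_comm]
  refine sum_congr rfl fun d _ => sum_congr rfl fun b _ => ?_
  ring

theorem emT_pos (hp : ∀ b d, 0 ≤ p b d) (hn : ∀ d, 0 ≤ n d) {lam : B → ℝ}
    (hlam : Admissible p n lam) {b : B} (hb : ∃ d, 0 < n d * p b d) : 0 < emT p n lam b := by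
  obtain ⟨d₀, hd₀⟩ := hb
  have hgd₀ := hlam.2 d₀ (pos_of_mul_pos_left hd₀ (hp b d₀))
  refine mul_pos (hlam.1 b) (sum_pos' (fun d _ => ?_) ⟨d₀, mem_univ _, div_pos hd₀ hgd₀⟩)
  exact div_nonneg (mul_nonneg (hn d) (hp b d)) (g_nonneg (hp · d) fun b => (hlam.1 b).le)

theorem admissible_emT (hp : ∀ b d, 0 ≤ p b d) (hn : ∀ d, 0 ≤ n d) {lam : B → ℝ}
    (hlam : Admissible p n lam) (hb : ∀ b, ∃ d, 0 < n d * p b d) :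
    Admissible p n (emT p n lam) :=
  have hpos b := emT_pos hp hn hlam (hb b)
  ⟨hpos, fun d hd => g_pos_of_g_pos (hp · d) hpos (hlam.2 d hd)⟩

end EM

theorem em_monotone_general {B D : Type*} [Fintype B] [Fintype D]
    (p : B → D → ℝ) (hp : ∀ b d, 0 ≤ p b d) (hpsum : ∀ b, ∑ d, p b d = 1)
    (n : D → ℝ) (hn : ∀ d, 0 ≤ n d)
    (lam0 : B → ℝ) (hlam0 : Admissible p n lam0)
    (hb : ∀ b, ∃ d, n d * p b d > 0) :
    Admissible p n (emT p n lam0) ∧ logLik p n (emT p n lam0) ≥ logLik p n lam0 := by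
  set lam1 := emT p n lam0
  have hadm1 : Admissible p n lam1 := admissible_emT hp hn hlam0 hb
  refine ⟨hadm1, ?_⟩
  rw [ge_iff_le, ← sub_nonneg, logLik_eq hpsum, logLik_eq hpsum]
  calc 0 ≤ ∑ b, (lam1 b * log (lam1 b / lam0 b) - (lam1 b - lam0 b)) :=
        sum_nonneg fun b _ => sub_nonneg.2 (sub_le_mul_log_div (hlam0.1 b) (hadm1.1 b))
    _ = ∑ d, n d / g p lam0 d * ∑ b, p b d * lam0 b * log (lam1 b / lam0 b) -
          (∑ b, lam1 b - ∑ b, lam0 b) := by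
        rw [sum_sub_distrib, sum_sub_distrib, sum_emT_mul_eq]
    _ ≤ ∑ d, n d * (log (g p lam1 d) - log (g p lam0 d)) - (∑ b, lam1 b - ∑ b, lam0 b) :=
        sub_le_sub_right (sum_le_sum fun d _ =>
          div_g_mul_sum_le_mul_log_sub (hp · d) hlam0.1 hadm1.1 (hn d) (hlam0.2 d)) _
    _ = _ := by
        simp only [mul_sub, sum_sub_distrib]
        ring

/-- monotonicity of the Shepp–Vardi EM iteration: T λ0 is admissible and
ℓ does not decrease along the EM step. -/
theorem em_monotone {B D : Type*} [Fintype B] [Fintype D] [Nonempty B] [Nonempty D]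
    (p : B → D → ℝ) (hp : ∀ b d, 0 ≤ p b d) (hpsum : ∀ b, ∑ d, p b d = 1)
    (n : D → ℝ) (hn : ∀ d, 0 ≤ n d)
    (lam0 : B → ℝ) (hlam0 : Admissible p n lam0)
    (hb : ∀ b, ∃ d, n d * p b d > 0) :
    Admissible p n (emT p n lam0) ∧ logLik p n (emT p n lam0) ≥ logLik p n lam0 :=
  em_monotone_general p hp hpsum n hn lam0 hlam0 hb
end
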